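/- For any fixed classifier h, any real number ⟦h⟧, any n ≥ 1, and any 0 < δ < 1, the probability over the draw of the i.i.d. training sample Z^n that |R_D(h) − R̂_D(h)| > φ_D(h, δ) is at most δ · 2^{−⟦h⟧}. -/

import Mathlib

open MeasureTheory ENNReal

/-- Symmetric deviation between two extended nonnegative reals. -/
noncomputable def edistE (a b : ℝ≥0∞) : ℝ≥0∞ := (a - b) ⊔ (b - a)

/-- The false discovery rate `R_D(h) = P(Y = 0 | h(X) = 1)`, equal to `∞` when
`P(h(X) = 1) = 0`. -/
noncomputable def RD {𝓧 : Type*} [MeasurableSpace 𝓧] (P : Measure (𝓧 × Bool))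
    (h : 𝓧 → Bool) : ℝ≥0∞ :=
  if 0 < P {z : 𝓧 × Bool | h z.1 = true} then
    P {z : 𝓧 × Bool | z.2 = false ∧ h z.1 = true} / P {z : 𝓧 × Bool | h z.1 = true}
  else ⊤

/-- The empirical number of discoveries `n_D(h, Zⁿ)`. -/
def nD {𝓧 : Type*} {n : ℕ} (h : 𝓧 → Bool) (ω : Fin n → 𝓧 × Bool) : ℕ :=
  (Finset.univ.filter fun i => h (ω i).1 = true).card

/-- The empirical false discovery rate `R̂_D(h)`, equal to `∞` when `n_D(h, Zⁿ) = 0`. -/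
noncomputable def RhatD {𝓧 : Type*} {n : ℕ} (h : 𝓧 → Bool) (ω : Fin n → 𝓧 × Bool) : ℝ≥0∞ :=
  if 0 < nD h ω then
    ((Finset.univ.filter fun i => (ω i).2 = false ∧ h (ω i).1 = true).card : ℝ≥0∞)
      / (nD h ω : ℝ≥0∞)
  else ⊤

/-- The penalty `√((⟦h⟧ log 2 + log(2/δ)) / (2 m))`, equal to `∞` when `m = 0`. -/
noncomputable def pen (c δ : ℝ) (m : ℕ) : ℝ≥0∞ :=
  if 0 < m then ENNReal.ofReal (Real.sqrt ((c * Real.log 2 + Real.log (2 / δ)) / (2 * m)))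
  else ⊤

/-!
Conditionally on the set `S` of discoveries, the labels of the discovered points are i.i.d.
with `P(Y = 0) = R_D(h)`: on the box `{discoveries = S}` the product measure factors as its
mass times the product of the conditional laws `P[· | h(X) = 1]` and `P[· | h(X) = 0]`.
Hoeffding's inequality then bounds the conditional probability of
`|R̂_D(h) - R_D(h)| > φ_D(h, δ)` by `2 exp (-2 |S| φ_D²) = 2 exp (-(⟦h⟧ log 2 + log (2/δ)))`,
which is `δ 2^(-⟦h⟧)`, and the boxes partition the sample space.
-/

open ProbabilityTheory Real
open scoped NNReal Finset

theorem measure_le_abs_sum_sub_integral_le {Ω ι : Type*} [MeasurableSpace Ω]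
    {μ : Measure Ω} [IsProbabilityMeasure μ] {X : ι → Ω → ℝ} (hX : iIndepFun X μ)
    (hXm : ∀ i, AEMeasurable (X i) μ) (hX01 : ∀ i, ∀ᵐ ω ∂μ, X i ω ∈ Set.Icc 0 1)
    (s : Finset ι) {t : ℝ} (ht : 0 ≤ t) :
    μ {ω | t ≤ |∑ i ∈ s, (X i ω - μ[X i])|} ≤ ENNReal.ofReal (2 * exp (-2 * t ^ 2 / #s)) := by
  set Y : ι → Ω → ℝ := fun i ω => X i ω - μ[X i]
  have hY : ∀ i ∈ s, HasSubgaussianMGF (Y i) 4⁻¹ μ := fun i _ => by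
    simpa [show ((2 : ℝ≥0) ^ 2)⁻¹ = 4⁻¹ by norm_num] using
      hasSubgaussianMGF_of_mem_Icc (hXm i) (hX01 i)
  have hY_indep : iIndepFun Y μ := hX.comp _ fun i => measurable_id.sub_const _
  have hnegY_indep : iIndepFun (fun i => -Y i) μ :=
    hY_indep.comp (fun _ x => -x) fun _ => measurable_neg
  have hexp : exp (-t ^ 2 / (2 * ((∑ i ∈ s, (4⁻¹ : ℝ≥0) : ℝ≥0) : ℝ))) =
      exp (-2 * t ^ 2 / #s) := by
    push_cast [Finset.sum_const, nsmul_eq_mul]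
    ring_nf
  have upper := HasSubgaussianMGF.measure_sum_ge_le_of_iIndepFun hY_indep hY ht
  have lower := HasSubgaussianMGF.measure_sum_ge_le_of_iIndepFun hnegY_indep
    (fun i hi => (hY i hi).neg) ht
  rw [hexp] at upper lower
  calc μ {ω | t ≤ |∑ i ∈ s, Y i ω|}
      ≤ μ ({ω | t ≤ ∑ i ∈ s, Y i ω} ∪ {ω | t ≤ ∑ i ∈ s, (-Y i) ω}) := by
        refine measure_mono fun ω hω => ?_
        simp only [Set.mem_ofPred_eq, Pi.neg_apply, Finset.sum_neg_distrib,
          Set.mem_union] at hω ⊢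
        exact (le_abs'.mp hω).symm.imp_right fun h => by linarith
    _ ≤ μ {ω | t ≤ ∑ i ∈ s, Y i ω} + μ {ω | t ≤ ∑ i ∈ s, (-Y i) ω} := measure_union_le _ _
    _ ≤ ENNReal.ofReal (exp (-2 * t ^ 2 / #s)) + ENNReal.ofReal (exp (-2 * t ^ 2 / #s)) := by
        gcongr <;> rw [← ofReal_measureReal] <;> gcongr
    _ = ENNReal.ofReal (2 * exp (-2 * t ^ 2 / #s)) := by
        rw [← ENNReal.ofReal_add (by positivity) (by positivity), two_mul]

theorem MeasureTheory.Measure.pi_univ_pi_inter_eq_mul_pi_cond {ι : Type*} [Fintype ι]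
    {α : ι → Type*} [∀ i, MeasurableSpace (α i)] (μ : ∀ i, Measure (α i))
    [∀ i, IsFiniteMeasure (μ i)] {s : ∀ i, Set (α i)} (hs : ∀ i, MeasurableSet (s i))
    (E : Set (∀ i, α i)) :
    Measure.pi μ (Set.univ.pi s ∩ E) =
      Measure.pi μ (Set.univ.pi s) * Measure.pi (fun i => (μ i)[|s i]) E := by
  have hrestrict : Measure.pi (fun i => (μ i).restrict (s i)) =
      (∏ i, μ i (s i)) • Measure.pi (fun i => (μ i)[|s i]) := by
    refine Measure.pi_eq fun t ht => ?_
    rw [Measure.smul_apply, Measure.pi_pi, smul_eq_mul, ← Finset.prod_mul_distrib]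
    refine Finset.prod_congr rfl fun i _ => ?_
    rw [Measure.restrict_apply (ht i), mul_comm, cond_mul_eq_inter (hs i), Set.inter_comm]
  rw [Set.inter_comm, ← Measure.restrict_apply' (MeasurableSet.univ_pi hs),
    Measure.restrict_pi_pi, hrestrict, Measure.pi_pi, Measure.smul_apply, smul_eq_mul]

theorem measure_le_abs_card_filter_sub_le {ι α : Type*} [Fintype ι] [MeasurableSpace α]
    (κ : ι → Measure α) [∀ i, IsProbabilityMeasure (κ i)] {F : Set α}
    [DecidablePred (· ∈ F)] (hF : MeasurableSet F) (S : Finset ι) {q : ℝ}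
    (hq : ∀ i ∈ S, (κ i).real F = q) {t : ℝ} (ht : 0 ≤ t) :
    Measure.pi κ {ω | t ≤ |(#{i ∈ S | ω i ∈ F} : ℝ) - #S * q|} ≤
      ENNReal.ofReal (2 * exp (-2 * t ^ 2 / #S)) := by
  set X : ι → (ι → α) → ℝ := fun i ω => F.indicator 1 (ω i)
  have hX_indep : iIndepFun X (Measure.pi κ) :=
    iIndepFun_pi fun _ => (measurable_one.indicator hF).aemeasurable
  have hXm : ∀ i, AEMeasurable (X i) (Measure.pi κ) := fun i =>
    ((measurable_one.indicator hF).comp (measurable_pi_apply i)).aemeasurable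
  have hX01 : ∀ i, ∀ᵐ ω ∂Measure.pi κ, X i ω ∈ Set.Icc 0 1 := fun i =>
    ae_of_all _ fun ω => by by_cases h : ω i ∈ F <;> simp [X, h]
  have hmean : ∀ i ∈ S, (Measure.pi κ)[X i] = q := fun i hi => by
    rw [integral_comp_eval (measurable_one.indicator hF).aestronglyMeasurable,
      integral_indicator_one hF, hq i hi]
  have hsum : ∀ ω, ∑ i ∈ S, (X i ω - (Measure.pi κ)[X i]) = #{i ∈ S | ω i ∈ F} - #S * q := by
    intro ω
    rw [Finset.sum_congr rfl fun i hi => by rw [hmean i hi], Finset.sum_sub_distrib,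
      Finset.natCast_card_filter, Finset.sum_const, nsmul_eq_mul]
    simp [X, Set.indicator_apply]
  simpa only [hsum] using measure_le_abs_sum_sub_integral_le hX_indep hXm hX01 S ht

theorem edistE_eq_ofReal_abs {a b : ℝ≥0∞} (ha : a ≠ ⊤) (hb : b ≠ ⊤) :
    edistE a b = ENNReal.ofReal |a.toReal - b.toReal| := by
  rw [edistE, abs_eq_max_neg, neg_sub, ENNReal.ofReal_max,
    ENNReal.ofReal_sub _ ENNReal.toReal_nonneg, ENNReal.ofReal_sub _ ENNReal.toReal_nonneg,
    ENNReal.ofReal_toReal ha, ENNReal.ofReal_toReal hb]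

theorem measure_pen_lt_edistE_le {ι α : Type*} [Fintype ι] [MeasurableSpace α]
    (κ : ι → Measure α) [∀ i, IsProbabilityMeasure (κ i)] {F : Set α}
    [DecidablePred (· ∈ F)] (hF : MeasurableSet F) (S : Finset ι) {r : ℝ≥0∞}
    (hr : ∀ i ∈ S, κ i F = r) (c δ : ℝ) :
    Measure.pi κ {ω | pen c δ #S < edistE r (#{i ∈ S | ω i ∈ F} / #S)} ≤
      ENNReal.ofReal (2 * exp (-(c * Real.log 2 + Real.log (2 / δ)))) := by
  set L := c * Real.log 2 + Real.log (2 / δ)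
  rcases le_or_gt L 0 with hL | hL
  · refine prob_le_one.trans (ENNReal.one_le_ofReal.mpr ?_)
    nlinarith [one_le_exp (neg_nonneg.mpr hL)]
  rcases S.eq_empty_or_nonempty with rfl | ⟨i₀, hi₀⟩
  · simp [pen]
  set m := #S
  have hm_pos : 0 < m := S.card_pos.mpr ⟨i₀, hi₀⟩
  have hm : (0 : ℝ) < m := by exact_mod_cast hm_pos
  have hr_top : r ≠ ⊤ := hr i₀ hi₀ ▸ measure_ne_top _ _
  set ε := √(L / (2 * m))
  have hpen : pen c δ m = ENNReal.ofReal ε := if_pos hm_pos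
  have hsubset : {ω : ι → α | pen c δ m < edistE r (#{i ∈ S | ω i ∈ F} / m)} ⊆
      {ω | m * ε ≤ |(#{i ∈ S | ω i ∈ F} : ℝ) - m * r.toReal|} := by
    intro ω hω
    set k := #{i ∈ S | ω i ∈ F}
    rw [Set.mem_ofPred_eq, hpen, edistE_eq_ofReal_abs hr_top
      (ENNReal.div_ne_top (ENNReal.natCast_ne_top k) (by exact_mod_cast hm_pos.ne')),
      ENNReal.ofReal_lt_ofReal_iff_of_nonneg (Real.sqrt_nonneg _), ENNReal.toReal_div,
      ENNReal.toReal_natCast, ENNReal.toReal_natCast] at hω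
    have hk : (k : ℝ) - m * r.toReal = -(m * (r.toReal - k / m)) := by field_simp; ring
    rw [Set.mem_ofPred_eq, hk, abs_neg, abs_mul, abs_of_pos hm]
    exact mul_le_mul_of_nonneg_left hω.le hm.le
  have hexp : -2 * (m * ε) ^ 2 / m = -L := by
    rw [mul_pow, Real.sq_sqrt (by positivity)]
    field_simp
  calc _ ≤ _ := measure_mono hsubset
    _ ≤ _ := measure_le_abs_card_filter_sub_le κ hF S
          (fun i hi => by rw [measureReal_def, hr i hi]) (by positivity)
    _ = _ := by rw [hexp]

def discoveries {𝓧 ι : Type*} [Fintype ι] (h : 𝓧 → Bool) (ω : ι → 𝓧 × Bool) : Finset ι :=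
  {i | h (ω i).1 = true}

theorem setOf_discoveries_eq {𝓧 ι : Type*} [Fintype ι] [DecidableEq ι] (h : 𝓧 → Bool)
    (S : Finset ι) :
    {ω : ι → 𝓧 × Bool | discoveries h ω = S} =
      Set.univ.pi fun i => if i ∈ S then {z | h z.1 = true} else {z | h z.1 = true}ᶜ := by
  ext ω
  simp only [discoveries, Finset.ext_iff, Finset.mem_filter, Finset.mem_univ, true_and,
    Set.mem_ofPred_eq, Set.mem_pi, Set.mem_univ, forall_const]
  refine forall_congr' fun i => ?_
  by_cases hi : i ∈ S <;> simp [hi]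

theorem measurableSet_ite_discovery {𝓧 ι : Type*} [MeasurableSpace 𝓧] [DecidableEq ι]
    {h : 𝓧 → Bool} (hmeas : Measurable h) (S : Finset ι) (i : ι) :
    MeasurableSet (if i ∈ S then {z : 𝓧 × Bool | h z.1 = true} else {z | h z.1 = true}ᶜ) := by
  have hH : MeasurableSet {z : 𝓧 × Bool | h z.1 = true} :=
    (hmeas.comp measurable_fst) (measurableSet_singleton true)
  split_ifs
  exacts [hH, hH.compl]

theorem RD_eq_cond {𝓧 : Type*} [MeasurableSpace 𝓧] (P : Measure (𝓧 × Bool)) (h : 𝓧 → Bool)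
    (hH : P {z | h z.1 = true} ≠ 0) :
    RD P h = P[{z | z.2 = false} | {z | h z.1 = true}] := by
  have hF : MeasurableSet {z : 𝓧 × Bool | z.2 = false} :=
    measurable_snd (measurableSet_singleton false)
  rw [RD, if_pos (pos_iff_ne_zero.mpr hH), cond_apply' hF, ENNReal.div_eq_inv_mul,
    Set.inter_comm]
  rfl

theorem measure_discoveries_eq_inter_le {𝓧 ι : Type*} [MeasurableSpace 𝓧] [Fintype ι]
    [DecidableEq ι] (P : Measure (𝓧 × Bool)) [IsProbabilityMeasure P] {h : 𝓧 → Bool}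
    (hmeas : Measurable h) (c δ : ℝ) (S : Finset ι) :
    Measure.pi (fun _ => P) ({ω | discoveries h ω = S} ∩
        {ω | pen c δ #S < edistE (RD P h) (#{i ∈ S | ω i ∈ {z | z.2 = false}} / #S)}) ≤
      Measure.pi (fun _ => P) {ω | discoveries h ω = S} *
        ENNReal.ofReal (2 * exp (-(c * Real.log 2 + Real.log (2 / δ)))) := by
  rw [setOf_discoveries_eq,
    Measure.pi_univ_pi_inter_eq_mul_pi_cond _ (measurableSet_ite_discovery hmeas S)]
  set H : Set (𝓧 × Bool) := {z | h z.1 = true}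
  set s : ι → Set (𝓧 × Bool) := fun i => if i ∈ S then H else Hᶜ
  by_cases h0 : Measure.pi (fun _ => P) (Set.univ.pi s) = 0
  · simp [h0]
  have hs0 : ∀ i, P (s i) ≠ 0 := by
    rw [Measure.pi_pi] at h0
    exact fun i => Finset.prod_ne_zero_iff.mp h0 i (Finset.mem_univ i)
  have : ∀ i, IsProbabilityMeasure (P[|s i]) := fun i => cond_isProbabilityMeasure (hs0 i)
  have hF : MeasurableSet {z : 𝓧 × Bool | z.2 = false} :=
    measurable_snd (measurableSet_singleton false)
  refine mul_le_mul_right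
    (measure_pen_lt_edistE_le (r := RD P h) _ hF S (fun i hi => ?_) c δ) _
  have hH : P H ≠ 0 := by simpa [s, hi] using hs0 i
  rw [if_pos hi, RD_eq_cond P h hH]

theorem setOf_pen_lt_edistE_subset {𝓧 : Type*} [MeasurableSpace 𝓧] (P : Measure (𝓧 × Bool))
    (h : 𝓧 → Bool) (c δ : ℝ) {n : ℕ} :
    {ω : Fin n → 𝓧 × Bool | pen c δ (nD h ω) < edistE (RD P h) (RhatD h ω)} ⊆
      ⋃ S : Finset (Fin n), {ω | discoveries h ω = S} ∩
        {ω | pen c δ #S < edistE (RD P h) (#{i ∈ S | ω i ∈ {z | z.2 = false}} / #S)} := by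
  intro ω hω
  refine Set.mem_iUnion.mpr ⟨discoveries h ω, rfl, ?_⟩
  rw [Set.mem_ofPred_eq, RhatD] at hω
  split_ifs at hω with hpos
  · simpa [discoveries, nD, Finset.filter_filter, and_comm] using hω
  · simp [pen, hpos] at hω

theorem ofReal_two_mul_exp_neg_eq {c δ : ℝ} (hδ : 0 < δ) :
    ENNReal.ofReal (2 * exp (-(c * Real.log 2 + Real.log (2 / δ)))) =
      ENNReal.ofReal δ * (2 : ℝ≥0∞) ^ (-c) := by
  have h2c : (2 : ℝ≥0∞) ^ (-c) = ENNReal.ofReal ((2 : ℝ) ^ (-c)) := by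
    rw [← ENNReal.ofReal_rpow_of_pos two_pos, ENNReal.ofReal_ofNat]
  rw [h2c, ← ENNReal.ofReal_mul hδ.le, neg_add, exp_add, exp_neg (Real.log _),
    exp_log (by positivity), Real.rpow_def_of_pos two_pos, mul_neg, mul_comm (Real.log 2)]
  field_simp

theorem fdr_single_deviation_bound_general
    {𝓧 : Type*} [MeasurableSpace 𝓧] (P : Measure (𝓧 × Bool)) [IsProbabilityMeasure P]
    (h : 𝓧 → Bool) (hmeas : Measurable h) (c : ℝ)
    (n : ℕ) (δ : ℝ) (hδ0 : 0 < δ) :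
    (Measure.pi fun _ : Fin n => P)
        {ω | pen c δ (nD h ω) < edistE (RD P h) (RhatD h ω)} ≤
      ENNReal.ofReal δ * (2 : ℝ≥0∞) ^ (-c) := by
  set ν := Measure.pi fun _ : Fin n => P
  have hD : ∀ S : Finset (Fin n), MeasurableSet {ω : Fin n → 𝓧 × Bool | discoveries h ω = S} :=
    fun S => setOf_discoveries_eq h S ▸ .univ_pi (measurableSet_ite_discovery hmeas S)
  have hpartition : ∑ S : Finset (Fin n), ν {ω | discoveries h ω = S} = 1 := by
    have := sum_measure_preimage_singleton (μ := ν) Finset.univ fun S _ => hD S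
    rwa [Finset.coe_univ, Set.preimage_univ, measure_univ] at this
  calc _ ≤ ∑ S : Finset (Fin n), ν ({ω | discoveries h ω = S} ∩
          {ω | pen c δ #S < edistE (RD P h) (#{i ∈ S | ω i ∈ {z | z.2 = false}} / #S)}) :=
        (measure_mono (setOf_pen_lt_edistE_subset P h c δ)).trans (measure_iUnion_fintype_le _ _)
    _ ≤ ∑ S : Finset (Fin n), ν {ω | discoveries h ω = S} *
          ENNReal.ofReal (2 * exp (-(c * Real.log 2 + Real.log (2 / δ)))) :=
        Finset.sum_le_sum fun S _ => measure_discoveries_eq_inter_le P hmeas c δ S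
    _ = ENNReal.ofReal δ * (2 : ℝ≥0∞) ^ (-c) := by
        rw [← Finset.sum_mul, hpartition, one_mul, ofReal_two_mul_exp_neg_eq hδ0]

/-- **Single-classifier deviation bound.** For any fixed classifier `h`, any real
codelength `c = ⟦h⟧`, any `n ≥ 1` and any `0 < δ < 1`, the probability over the draw of an
i.i.d. sample of size `n` that `|R_D(h) - R̂_D(h)| > φ_D(h, δ)` is at most `δ · 2^(-⟦h⟧)`.
(When `n_D = 0` both the deviation and the penalty are `∞`, so the bad event does not
occur.) -/
theorem fdr_single_deviation_bound
    {𝓧 : Type*} [MeasurableSpace 𝓧] (P : Measure (𝓧 × Bool)) [IsProbabilityMeasure P]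
    (h : 𝓧 → Bool) (hmeas : Measurable h) (c : ℝ)
    (n : ℕ) (hn : 1 ≤ n) (δ : ℝ) (hδ0 : 0 < δ) (hδ1 : δ < 1) :
    (Measure.pi fun _ : Fin n => P)
        {ω | pen c δ (nD h ω) < edistE (RD P h) (RhatD h ω)} ≤
      ENNReal.ofReal δ * (2 : ℝ≥0∞) ^ (-c) :=
  fdr_single_deviation_bound_general P h hmeas c n δ hδ0
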